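/- arXiv:2111.13465 — 3 statements merged into one kernel-verified Lean document; each statement's English description precedes it below -/
import Mathlib

section
/- For a partition λ with at most ℓ parts, the two Jacobi–Trudi determinants agree: det(h_{λ_i + j - i})_{1≤i,j≤ℓ(λ)} = det(e_{λ'_i + j - i})_{1≤i,j≤ℓ(λ')}, where λ' is the conjugate partition and h, e are the complete homogeneous and elementary symmetric polynomials in infinitely many (or sufficiently many) variables. -/
/-!
The generating series `H(t) = ∑ hₖ tᵏ = ∏ 1/(1 - xᵢ t)` and `E(t) = ∑ eₖ tᵏ = ∏ (1 + xᵢ t)`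
satisfy `H(t) E(-t) = 1`, so the upper triangular Toeplitz matrices `(h_{j-i})` and
`((-1)^{j-i} e_{j-i})` of size `ℓ + m` are mutually inverse (`m = λ₁`). Reorder rows and columns
of the first one along the boundary of the Young diagram of `λ` in the `ℓ × m` box: its rows and
columns then index complementary positions, the top-left `ℓ × ℓ` block becomes `(h_{λᵢ+j-i})`, and
the complementary block of the inverse becomes the transpose of the signed dual matrix
`((-1)^{λ'ᵢ+j-i} e_{λ'ᵢ+j-i})`. Jacobi's complementary minor identity equates the two minors up to
the sign of the reordering, which is `(-1)^{|λ|}` since removing a corner box of `λ` composes it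
with a transposition; the signs inside the dual matrix contribute `(-1)^{|λ'|} = (-1)^{|λ|}`.
-/

open MvPolynomial Finset

/-- Integer-indexed complete homogeneous symmetric polynomial in `N` variables
(`0` for negative index, `h_0 = 1`). -/
noncomputable def hZ (N : ℕ) (m : ℤ) : MvPolynomial (Fin N) ℤ :=
  if 0 ≤ m then MvPolynomial.hsymm (Fin N) ℤ m.toNat else 0

/-- Integer-indexed elementary symmetric polynomial in `N` variables
(`0` for negative index, `e_0 = 1`, and `e_m = 0` for `m > N`). -/
noncomputable def eZ (N : ℕ) (m : ℤ) : MvPolynomial (Fin N) ℤ :=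
  if 0 ≤ m then MvPolynomial.esymm (Fin N) ℤ m.toNat else 0

namespace MvPolynomial

variable (σ R : Type*) [Fintype σ] [CommRing R]

theorem mk_esymm_eq_prod :
    PowerSeries.mk (esymm σ R) = ∏ i, PowerSeries.rescale (X i) (1 + PowerSeries.X) := by
  ext n
  simp only [map_add, map_one, PowerSeries.rescale_X, prod_one_add, prod_mul_distrib, ← map_prod,
    prod_const, map_sum, PowerSeries.coeff_C_mul_X_pow, PowerSeries.coeff_mk, esymm,
    powersetCard_eq_filter, sum_filter, eq_comm (a := n)]

theorem mk_hsymm_eq_prod [DecidableEq σ] :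
    PowerSeries.mk (hsymm σ R) = ∏ i, PowerSeries.rescale (X i) (PowerSeries.mk 1) := by
  refine PowerSeries.ext fun n => ?_
  simp only [PowerSeries.coeff_mk, PowerSeries.coeff_prod, hsymm, PowerSeries.coeff_rescale,
    Pi.one_apply, mul_one]
  refine sum_bij' (fun s _ => Multiset.toFinsupp s.1)
    (fun l hl => ⟨Finsupp.toMultiset l, ?_⟩) (fun s _ => ?_) (fun _ _ => mem_univ _)
    (fun s _ => Subtype.ext (by simp)) (fun l _ => by simp) (fun s _ => ?_)
  · simpa [mem_finsuppAntidiag, Finsupp.card_toMultiset, Finsupp.sum_fintype] using hl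
  · refine mem_finsuppAntidiag.2 ⟨?_, subset_univ _⟩
    change ∑ i, Multiset.count i s.1 = n
    rw [Multiset.sum_count_eq_card fun _ _ => mem_univ _, s.2]
  · rw [prod_multiset_map_count]
    exact prod_subset (subset_univ _) fun i _ hi => by simp_all

theorem mk_hsymm_mul_rescale_mk_esymm [DecidableEq σ] :
    PowerSeries.mk (hsymm σ R) * PowerSeries.rescale (-1) (PowerSeries.mk (esymm σ R)) = 1 := by
  rw [mk_hsymm_eq_prod, mk_esymm_eq_prod, map_prod, ← prod_mul_distrib]
  refine prod_eq_one fun i _ => ?_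
  rw [PowerSeries.rescale_rescale, mul_comm (X i), ← PowerSeries.rescale_rescale, map_add, map_one,
    PowerSeries.rescale_neg_one_X, ← sub_eq_add_neg, ← map_mul,
    PowerSeries.mk_one_mul_one_sub_eq_one, map_one]

end MvPolynomial

section Toeplitz

variable {R : Type*} [CommRing R]

noncomputable def coeffZ (F : PowerSeries R) (k : ℤ) : R :=
  if 0 ≤ k then PowerSeries.coeff k.toNat F else 0

theorem coeffZ_natCast (F : PowerSeries R) (n : ℕ) : coeffZ F n = PowerSeries.coeff n F := by
  simp [coeffZ]

theorem coeffZ_of_neg (F : PowerSeries R) {k : ℤ} (hk : k < 0) : coeffZ F k = 0 :=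
  if_neg hk.not_ge

theorem coeffZ_one (k : ℤ) : coeffZ (1 : PowerSeries R) k = if k = 0 then 1 else 0 := by
  rcases lt_or_ge k 0 with hk | hk
  · simp [coeffZ_of_neg _ hk, hk.ne]
  · lift k to ℕ using hk
    simp [coeffZ_natCast, PowerSeries.coeff_one]

theorem coeffZ_rescale_neg_one (F : PowerSeries R) (k : ℤ) :
    coeffZ (PowerSeries.rescale (-1) F) k = (-1) ^ k.toNat * coeffZ F k := by
  unfold coeffZ
  split_ifs <;> simp [PowerSeries.coeff_rescale]

noncomputable def toeplitz (F : PowerSeries R) (n : ℕ) : Matrix (Fin n) (Fin n) R :=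
  Matrix.of fun i j => coeffZ F (j - i)

noncomputable def jacobiTrudi (F : PowerSeries R) {k : ℕ} (ν : Fin k → ℕ) :
    Matrix (Fin k) (Fin k) R :=
  Matrix.of fun i j => coeffZ F (ν i + j - i)

theorem sum_range_coeffZ_mul_coeffZ (F G : PowerSeries R) {n i k : ℕ} (hk : k < n) :
    ∑ j ∈ range n, coeffZ F (j - i) * coeffZ G (k - j) = coeffZ (F * G) (k - i) := by
  have hvanish (j : ℕ) (hj : j < i ∨ k < j) : coeffZ F (j - i) * coeffZ G (k - j) = 0 := by
    rcases hj with hji | hkj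
    · rw [coeffZ_of_neg F (by omega), zero_mul]
    · rw [coeffZ_of_neg G (by omega), mul_zero]
  rcases lt_or_ge k i with hki | hik
  · rw [coeffZ_of_neg _ (by omega)]
    exact sum_eq_zero fun j _ => hvanish j (by omega)
  have hsupp : Ico i (k + 1) ⊆ range n := fun j hj => by simp at hj ⊢; omega
  rw [← sum_subset hsupp fun j _ hj => hvanish j (by simp at hj; omega), sum_Ico_eq_sum_range,
    show (k : ℤ) - i = (k - i : ℕ) by omega, coeffZ_natCast, PowerSeries.coeff_mul,
    Nat.sum_antidiagonal_eq_sum_range_succ_mk, show k + 1 - i = (k - i).succ by omega]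
  refine sum_congr rfl fun s hs => ?_
  rw [mem_range] at hs
  rw [show ((i + s : ℕ) : ℤ) - i = s by omega,
    show (k : ℤ) - (i + s : ℕ) = (k - i - s : ℕ) by omega, coeffZ_natCast, coeffZ_natCast]

theorem toeplitz_mul_toeplitz {F G : PowerSeries R} (h : F * G = 1) (n : ℕ) :
    toeplitz F n * toeplitz G n = 1 := by
  ext i k
  rw [Matrix.mul_apply, Matrix.one_apply]
  simp only [toeplitz, Matrix.of_apply]
  rw [Fin.sum_univ_eq_sum_range (fun j => coeffZ F (j - i) * coeffZ G (k - j)),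
    sum_range_coeffZ_mul_coeffZ F G k.isLt, h, coeffZ_one]
  simp only [sub_eq_zero, Nat.cast_inj, Fin.val_inj, eq_comm]

theorem det_toeplitz (F : PowerSeries R) (n : ℕ) :
    (toeplitz F n).det = PowerSeries.constantCoeff F ^ n := by
  rw [Matrix.det_of_isUpperTriangular (M := toeplitz F n)
    fun i j hji => coeffZ_of_neg F (by simp at hji; omega)]
  simp [toeplitz, coeffZ]

theorem det_jacobiTrudi_rescale_neg_one (F : PowerSeries R) {k : ℕ} (ν : Fin k → ℕ) :
    (jacobiTrudi (PowerSeries.rescale (-1) F) ν).det =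
      (-1) ^ (∑ i, ν i) * (jacobiTrudi F ν).det := by
  have hsigns : jacobiTrudi (PowerSeries.rescale (-1) F) ν =
      Matrix.diagonal (fun i => (-1 : R) ^ (ν i + i)) * jacobiTrudi F ν *
        Matrix.diagonal (fun j : Fin k => (-1 : R) ^ (j : ℕ)) := by
    ext i j
    simp only [Matrix.diagonal_mul, Matrix.mul_diagonal, jacobiTrudi, Matrix.of_apply,
      coeffZ_rescale_neg_one]
    rcases lt_or_ge ((ν i : ℤ) + j - i) 0 with hneg | hnonneg
    · simp [coeffZ_of_neg F hneg]
    · rw [mul_right_comm, ← pow_add, neg_one_pow_eq_pow_mod_two,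
        neg_one_pow_eq_pow_mod_two (n := ν i + i + j)]
      congr 2
      omega
  have hsq (i : Fin k) : (-1 : R) ^ (ν i + i) * (-1) ^ (i : ℕ) = (-1) ^ ν i := by
    rw [← pow_add, add_assoc, pow_add, ← two_mul, pow_mul, neg_one_sq, one_pow, mul_one]
  rw [hsigns, Matrix.det_mul, Matrix.det_mul, Matrix.det_diagonal, Matrix.det_diagonal,
    mul_right_comm, ← prod_mul_distrib]
  simp only [hsq, prod_pow_eq_pow_sum]

end Toeplitz

/-- Parts are indexed from `0`: `conjugate μ b` is the `(b + 1)`-st part of the conjugate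
partition, the length of column `b` of the Young diagram. -/
def conjugate {ℓ : ℕ} (μ : Fin ℓ → ℕ) (b : ℕ) : ℕ := #{i | b < μ i}

section Conjugate

variable {ℓ : ℕ} (μ : Fin ℓ → ℕ)

theorem conjugate_le (b : ℕ) : conjugate μ b ≤ ℓ :=
  (card_filter_le _ _).trans (card_fin ℓ).le

theorem conjugate_antitone : Antitone (conjugate μ) := fun _ _ hab =>
  card_le_card (monotone_filter_right _ fun _ _ h => lt_of_le_of_lt hab h)

theorem conjugate_zero (b : ℕ) : conjugate (0 : Fin ℓ → ℕ) b = 0 := by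
  simp [conjugate]

variable {μ}

theorem lt_conjugate_iff (hμ : Antitone μ) (i : Fin ℓ) (b : ℕ) :
    (i : ℕ) < conjugate μ b ↔ b < μ i := by
  constructor
  · intro hi
    by_contra! hb
    have hsub : ({j | b < μ j} : Finset (Fin ℓ)) ⊆ Iio i := fun j hj => by
      simp only [mem_filter, mem_univ, true_and] at hj
      exact mem_Iio.2 (lt_of_not_ge fun hij => ((hμ hij).trans hb).not_gt hj)
    exact ((card_le_card hsub).trans_eq (Fin.card_Iio i)).not_gt hi
  · intro hb
    have hsub : Iic i ⊆ ({j | b < μ j} : Finset (Fin ℓ)) := fun j hj => by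
      simpa using hb.trans_le (hμ (mem_Iic.1 hj))
    exact (Fin.card_Iic i).symm.trans_le (card_le_card hsub)

theorem sum_conjugate {m : ℕ} (hm : ∀ i, μ i ≤ m) : ∑ b : Fin m, conjugate μ b = ∑ i, μ i := by
  simp only [conjugate, card_filter]
  rw [sum_comm]
  refine sum_congr rfl fun i _ => ?_
  rw [Fin.sum_univ_eq_sum_range (fun b => if b < μ i then 1 else 0), sum_boole, Nat.cast_id,
    show (range m).filter (· < μ i) = range (μ i) by ext; simp; have := hm i; omega, card_range]

theorem exists_last_pos (hμ : ∑ i, μ i ≠ 0) : ∃ r, 0 < μ r ∧ ∀ j, r < j → μ j = 0 := by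
  have hne : ({i | 0 < μ i} : Finset (Fin ℓ)).Nonempty := by
    obtain ⟨i, -, hi⟩ := exists_ne_zero_of_sum_ne_zero hμ
    exact ⟨i, by simpa [Nat.pos_iff_ne_zero] using hi⟩
  refine ⟨_, (mem_filter.1 (max'_mem _ hne)).2, fun j hj => ?_⟩
  by_contra hj0
  exact hj.not_ge (le_max' _ j (by simpa [Nat.pos_iff_ne_zero] using hj0))

end Conjugate

/-- Walking along the boundary of the Young diagram of `μ` inside the `ℓ × m` box, the
vertical steps (rows `i`) and the horizontal steps (columns `b`) occupy the complementary
positions `m + i - μ i` and `m - 1 - b + μ'_b` (Macdonald, *Symmetric functions*, I (1.7)). -/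
def boundary {ℓ : ℕ} (μ : Fin ℓ → ℕ) (m : ℕ) : Fin ℓ ⊕ Fin m → Fin (ℓ + m)
  | .inl i => ⟨m + i - μ i, by omega⟩
  | .inr b => ⟨m - 1 - b + conjugate μ b, by have := conjugate_le μ b; omega⟩

section Boundary

variable {ℓ m : ℕ} {μ : Fin ℓ → ℕ}

@[simp] theorem boundary_inl (i : Fin ℓ) : (boundary μ m (.inl i) : ℕ) = m + i - μ i := rfl

@[simp] theorem boundary_inr (b : Fin m) :
    (boundary μ m (.inr b) : ℕ) = m - 1 - b + conjugate μ b := rfl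

theorem boundary_injective (hμ : Antitone μ) (hm : ∀ i, μ i ≤ m) :
    Function.Injective (boundary μ m) := by
  have hrow {i j : Fin ℓ} (hij : i < j) :
      (boundary μ m (.inl i) : ℕ) < boundary μ m (.inl j) := by
    have := hμ hij.le; have := hm i; simp only [boundary_inl]; omega
  have hcol {a b : Fin m} (hab : a < b) :
      (boundary μ m (.inr b) : ℕ) < boundary μ m (.inr a) := by
    have := conjugate_antitone μ (Fin.val_le_of_le hab.le)
    simp only [boundary_inr]; omega
  have hrowcol (i : Fin ℓ) (b : Fin m) :
      (boundary μ m (.inl i) : ℕ) ≠ boundary μ m (.inr b) := by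
    have := lt_conjugate_iff hμ i b; have := hm i; have := conjugate_le μ b
    simp only [boundary_inl, boundary_inr]; omega
  rintro (i | a) (j | b) h <;> rw [Fin.ext_iff] at h
  · rcases lt_trichotomy i j with hij | rfl | hij
    · exact absurd h (hrow hij).ne
    · rfl
    · exact absurd h (hrow hij).ne'
  · exact absurd h (hrowcol i b)
  · exact absurd h.symm (hrowcol j a)
  · rcases lt_trichotomy a b with hab | rfl | hab
    · exact absurd h (hcol hab).ne'
    · rfl
    · exact absurd h (hcol hab).ne

noncomputable def boundaryEquiv (hμ : Antitone μ) (hm : ∀ i, μ i ≤ m) :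
    Fin ℓ ⊕ Fin m ≃ Fin (ℓ + m) :=
  Equiv.ofBijective (boundary μ m)
    ((Fintype.bijective_iff_injective_and_card _).2 ⟨boundary_injective hμ hm, by simp⟩)

variable {r : Fin ℓ}

theorem antitone_update_corner (hμ : Antitone μ) (hcorner : ∀ j, r < j → μ j < μ r) :
    Antitone (Function.update μ r (μ r - 1)) := by
  intro i j hij
  rcases eq_or_ne i r with hi | hi <;> rcases eq_or_ne j r with hj | hj
  · rw [hi, hj]
  · rw [hi] at hij ⊢
    have := hcorner j (lt_of_le_of_ne hij hj.symm)
    rw [Function.update_self, Function.update_of_ne hj]; omega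
  · rw [hj] at hij ⊢
    have := hμ hij
    rw [Function.update_of_ne hi, Function.update_self]; omega
  · rw [Function.update_of_ne hi, Function.update_of_ne hj]; exact hμ hij

theorem conjugate_corner (hμ : Antitone μ) (hr : 0 < μ r) (hcorner : ∀ j, r < j → μ j < μ r) :
    conjugate μ (μ r - 1) = r + 1 := by
  rw [conjugate, ← Fin.card_Iic r]
  congr 1
  ext j
  simp only [mem_filter, mem_univ, true_and, mem_Iic]
  rcases le_or_gt j r with hjr | hrj
  · have := hμ hjr; simp only [hjr, iff_true]; omega
  · have := hcorner j hrj; simp only [hrj.not_ge, iff_false]; omega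

theorem conjugate_update_corner (hμ : Antitone μ) (hr : 0 < μ r)
    (hcorner : ∀ j, r < j → μ j < μ r) :
    conjugate (Function.update μ r (μ r - 1)) (μ r - 1) = r := by
  rw [conjugate, ← Fin.card_Iio r]
  congr 1
  ext j
  simp only [mem_filter, mem_univ, true_and, mem_Iio, Function.update_apply]
  rcases lt_trichotomy j r with hjr | rfl | hrj
  · have := hμ hjr.le; simp only [hjr, hjr.ne, if_false, iff_true]; omega
  · simp
  · have := hcorner j hrj; simp only [hrj.ne', hrj.not_gt, if_false, iff_false]; omega

theorem conjugate_update_corner_of_ne {b : ℕ} (hb : b ≠ μ r - 1) :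
    conjugate (Function.update μ r (μ r - 1)) b = conjugate μ b := by
  unfold conjugate
  congr 1
  refine filter_congr fun j _ => ?_
  rcases eq_or_ne j r with rfl | hjr
  · simp only [Function.update_self]; omega
  · rw [Function.update_of_ne hjr]

theorem boundary_update_corner (hμ : Antitone μ) (hm : ∀ i, μ i ≤ m) (hr : 0 < μ r)
    (hcorner : ∀ j, r < j → μ j < μ r) :
    boundary (Function.update μ r (μ r - 1)) m =
      boundary μ m ∘ Equiv.swap (.inl r) (.inr ⟨μ r - 1, by have := hm r; omega⟩) := by
  have hmr := hm r
  funext z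
  rcases z with j | b
  · rcases eq_or_ne j r with rfl | hjr
    · rw [Function.comp_apply, Equiv.swap_apply_left, Fin.ext_iff, boundary_inl, boundary_inr,
        conjugate_corner hμ hr hcorner, Function.update_self]
      dsimp only; omega
    · rw [Function.comp_apply, Equiv.swap_apply_of_ne_of_ne (by simpa) (by simp), Fin.ext_iff,
        boundary_inl, boundary_inl, Function.update_of_ne hjr]
  · by_cases hb : (b : ℕ) = μ r - 1
    · rw [show b = ⟨μ r - 1, by omega⟩ from Fin.ext hb, Function.comp_apply,
        Equiv.swap_apply_right, Fin.ext_iff, boundary_inr, boundary_inl,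
        conjugate_update_corner hμ hr hcorner]
      dsimp only; omega
    · rw [Function.comp_apply, Equiv.swap_apply_of_ne_of_ne (by simp)
        (by simpa [Fin.ext_iff] using hb), Fin.ext_iff, boundary_inr, boundary_inr,
        conjugate_update_corner_of_ne hb]

noncomputable def boundaryPerm (hμ : Antitone μ) (hm : ∀ i, μ i ≤ m) :
    Equiv.Perm (Fin ℓ ⊕ Fin m) :=
  (boundaryEquiv hμ hm).trans (boundaryEquiv (μ := 0) antitone_const fun _ => Nat.zero_le m).symm

theorem sign_boundaryPerm (hμ : Antitone μ) (hm : ∀ i, μ i ≤ m) :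
    Equiv.Perm.sign (boundaryPerm hμ hm) = (-1) ^ ∑ i, μ i := by
  obtain ⟨S, hS⟩ : ∃ S, ∑ i, μ i = S := ⟨_, rfl⟩
  induction S generalizing μ with
  | zero =>
    obtain rfl : μ = 0 := funext fun i => sum_eq_zero_iff.1 hS i (mem_univ i)
    simp [boundaryPerm]
  | succ S ih =>
    obtain ⟨r, hr, hlast⟩ := exists_last_pos (hS.trans_ne S.succ_ne_zero)
    have hcorner : ∀ j, r < j → μ j < μ r := fun j hj => (hlast j hj).trans_lt hr
    have hmr := hm r
    have hν := antitone_update_corner hμ hcorner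
    have hνm : ∀ i, Function.update μ r (μ r - 1) i ≤ m := fun i => by
      rw [Function.update_apply]; split_ifs <;> [omega; exact hm i]
    have hνS : ∑ i, Function.update μ r (μ r - 1) i = S := by
      have h1 := sum_update_of_mem (mem_univ r) μ (μ r - 1)
      have h2 := add_sum_erase univ μ (mem_univ r)
      rw [sdiff_singleton_eq_erase] at h1
      omega
    have hperm : boundaryPerm hν hνm =
        boundaryPerm hμ hm * Equiv.swap (.inl r) (.inr ⟨μ r - 1, by omega⟩) := by
      ext z : 1
      simp [boundaryPerm, boundaryEquiv, boundary_update_corner hμ hm hr hcorner]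
    have hsign := ih hν hνm hνS
    rw [hperm, Equiv.Perm.sign_mul, Equiv.Perm.sign_swap (by simp), hνS] at hsign
    rw [hS, pow_succ, ← hsign, mul_neg_one, mul_neg_one, neg_neg]

end Boundary

theorem Matrix.det_toBlocks₁₁_of_mul_eq_one {α β R : Type*} [Fintype α] [Fintype β]
    [DecidableEq α] [DecidableEq β] [CommRing R] {C D : Matrix (α ⊕ β) (α ⊕ β) R}
    (h : C * D = 1) : C.toBlocks₁₁.det = C.det * D.toBlocks₂₂.det := by
  have hblocks := C.fromBlocks_toBlocks ▸ D.fromBlocks_toBlocks ▸ h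
  rw [Matrix.fromBlocks_multiply, ← Matrix.fromBlocks_one, Matrix.fromBlocks_inj] at hblocks
  obtain ⟨-, h₁₂, -, h₂₂⟩ := hblocks
  have hcol : C * Matrix.fromBlocks 1 D.toBlocks₁₂ 0 D.toBlocks₂₂ =
      Matrix.fromBlocks C.toBlocks₁₁ 0 C.toBlocks₂₁ 1 := by
    conv_lhs => rw [← C.fromBlocks_toBlocks]
    simp [Matrix.fromBlocks_multiply, h₁₂, h₂₂]
  have := congrArg Matrix.det hcol
  rwa [Matrix.det_mul, Matrix.det_fromBlocks_zero₂₁, Matrix.det_fromBlocks_zero₁₂,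
    Matrix.det_one, Matrix.det_one, one_mul, mul_one, eq_comm] at this

section Duality

variable {R : Type*} [CommRing R] {ℓ m : ℕ} {μ : Fin ℓ → ℕ}

theorem det_jacobiTrudi_eq_neg_one_pow_mul_det_conjugate {H G : PowerSeries R}
    (hHG : H * G = 1) (hH : PowerSeries.constantCoeff H = 1)
    (hμ : Antitone μ) (hm : ∀ i, μ i ≤ m) :
    (jacobiTrudi H μ).det =
      (-1) ^ (∑ i, μ i) * (jacobiTrudi G fun b : Fin m => conjugate μ b).det := by
  set σ := boundaryEquiv hμ hm
  set σ₀ := boundaryEquiv (μ := 0) antitone_const fun _ => Nat.zero_le m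
  set C := (toeplitz H (ℓ + m)).submatrix σ σ₀
  set D := (toeplitz G (ℓ + m)).submatrix σ₀ σ
  have hCD : C * D = 1 := by
    rw [Matrix.submatrix_mul_equiv, toeplitz_mul_toeplitz hHG, Matrix.submatrix_one_equiv]
  have hC₁₁ : C.toBlocks₁₁ = jacobiTrudi H μ := by
    ext i j
    have := hm i
    simp only [C, σ, σ₀, boundaryEquiv, Matrix.toBlocks₁₁, toeplitz, jacobiTrudi,
      Matrix.of_apply, Matrix.submatrix_apply, Equiv.ofBijective_apply, boundary_inl,
      Pi.zero_apply]
    congr 1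
    omega
  have hD₂₂ : D.toBlocks₂₂ = (jacobiTrudi G fun b : Fin m => conjugate μ b).transpose := by
    ext a b
    have := conjugate_le μ b
    simp only [D, σ, σ₀, boundaryEquiv, Matrix.toBlocks₂₂, toeplitz, jacobiTrudi,
      Matrix.of_apply, Matrix.submatrix_apply, Matrix.transpose_apply, Equiv.ofBijective_apply,
      boundary_inr, conjugate_zero]
    congr 1
    omega
  have hdetC : C.det = (-1) ^ (∑ i, μ i) := by
    have : C = ((toeplitz H (ℓ + m)).submatrix σ₀ σ₀).submatrix (boundaryPerm hμ hm) id := by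
      ext z w; simp [C, boundaryPerm, σ, σ₀]
    rw [this, Matrix.det_permute, Matrix.det_submatrix_equiv_self, det_toeplitz, hH, one_pow,
      mul_one, sign_boundaryPerm]
    push_cast; rfl
  rw [← hC₁₁, Matrix.det_toBlocks₁₁_of_mul_eq_one hCD, hdetC, hD₂₂, Matrix.det_transpose]

theorem det_jacobiTrudi_eq_det_jacobiTrudi_conjugate {H E : PowerSeries R}
    (hHE : H * PowerSeries.rescale (-1) E = 1) (hH : PowerSeries.constantCoeff H = 1)
    (hμ : Antitone μ) (hm : ∀ i, μ i ≤ m) :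
    (jacobiTrudi H μ).det = (jacobiTrudi E fun b : Fin m => conjugate μ b).det := by
  rw [det_jacobiTrudi_eq_neg_one_pow_mul_det_conjugate hHE hH hμ hm,
    det_jacobiTrudi_rescale_neg_one, sum_conjugate hm, ← mul_assoc, ← pow_add, ← two_mul,
    pow_mul, neg_one_sq, one_pow, one_mul]

end Duality

theorem hZ_eq_coeffZ (N : ℕ) : hZ N = coeffZ (PowerSeries.mk (hsymm (Fin N) ℤ)) := by
  funext k
  simp only [hZ, coeffZ, PowerSeries.coeff_mk]

theorem eZ_eq_coeffZ (N : ℕ) : eZ N = coeffZ (PowerSeries.mk (esymm (Fin N) ℤ)) := by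
  funext k
  simp only [eZ, coeffZ, PowerSeries.coeff_mk]

theorem conjugate_succ_eq_card_filter_Icc (ℓ : ℕ) (lam : ℕ → ℕ) (b : ℕ) :
    conjugate (fun i : Fin ℓ => lam (i + 1)) b = #{a ∈ Icc 1 ℓ | b + 1 ≤ lam a} := by
  refine card_bij (fun i _ => i + 1) (fun i hi => ?_) (fun i _ j _ h => Fin.ext (by omega))
    (fun a ha => ?_)
  · simp only [mem_filter, mem_univ, true_and, mem_Icc] at hi ⊢
    omega
  · simp only [mem_filter, mem_Icc] at ha
    refine ⟨⟨a - 1, by omega⟩, ?_, by simp only; omega⟩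
    simp only [mem_filter, mem_univ, true_and, show a - 1 + 1 = a by omega]
    omega

theorem jacobiTrudi_eq_dual_jacobiTrudi_general (N ℓ : ℕ) (lam : ℕ → ℕ)
    (hanti : ∀ i j, 1 ≤ i → i ≤ j → lam j ≤ lam i) :
    Matrix.det (Matrix.of fun i j : Fin ℓ =>
        hZ N ((lam (i.val + 1) : ℤ) + (j.val : ℤ) - (i.val : ℤ))) =
      Matrix.det (Matrix.of fun i j : Fin (lam 1) =>
        eZ N ((((Finset.Icc 1 ℓ).filter fun a => i.val + 1 ≤ lam a).card : ℤ)
          + (j.val : ℤ) - (i.val : ℤ))) := by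
  have hμ : Antitone fun i : Fin ℓ => lam (i + 1) := fun i j hij =>
    hanti _ _ (by omega) (by simpa using hij)
  have hm : ∀ i : Fin ℓ, lam (i + 1) ≤ lam 1 := fun i => hanti _ _ le_rfl (by omega)
  have hH : PowerSeries.constantCoeff (PowerSeries.mk (hsymm (Fin N) ℤ)) = 1 := by
    rw [← PowerSeries.coeff_zero_eq_constantCoeff_apply, PowerSeries.coeff_mk, hsymm_zero]
  have key := det_jacobiTrudi_eq_det_jacobiTrudi_conjugate
    (mk_hsymm_mul_rescale_mk_esymm (Fin N) ℤ) hH hμ hm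
  simp only [jacobiTrudi, conjugate_succ_eq_card_filter_Icc] at key
  rw [hZ_eq_coeffZ, eZ_eq_coeffZ]
  exact key

/-- The two Jacobi–Trudi determinants agree: for a partition `λ` (given by a 1-based
part function `lam` with exactly `ℓ` nonzero parts) with conjugate partition
`λ'_i = #{j : λ_j ≥ i}` (which has `λ_1` parts),
`det (h_{λ_i + j - i})_{1 ≤ i,j ≤ ℓ(λ)} = det (e_{λ'_i + j - i})_{1 ≤ i,j ≤ ℓ(λ')}`
in `ℤ[x_1, ..., x_N]`. -/
theorem jacobiTrudi_eq_dual_jacobiTrudi (N ℓ : ℕ) (lam : ℕ → ℕ)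
    (hanti : ∀ i j, 1 ≤ i → i ≤ j → lam j ≤ lam i)
    (hpos : ∀ i, 1 ≤ i → i ≤ ℓ → 0 < lam i)
    (hzero : ∀ i, ℓ < i → lam i = 0) :
    Matrix.det (Matrix.of fun i j : Fin ℓ =>
        hZ N ((lam (i.val + 1) : ℤ) + (j.val : ℤ) - (i.val : ℤ))) =
      Matrix.det (Matrix.of fun i j : Fin (lam 1) =>
        eZ N ((((Finset.Icc 1 ℓ).filter fun a => i.val + 1 ≤ lam a).card : ℤ)
          + (j.val : ℤ) - (i.val : ℤ))) :=
  jacobiTrudi_eq_dual_jacobiTrudi_general N ℓ lam hanti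
end

section
/- Let A = ℤ[σ_1,...,σ_{n-k}, e_1,...,e_n]/(Ŷ_{k+1},...,Ŷ_n), where Ŷ_r = det(σ̂_{1+j−i})_{1≤i,j≤r}, with σ̂_r determined by the relation σ̃_r = ∑_{i=0}^{r} e_i σ̂_{r-i}, where σ̃_r = σ_r for r ≤ n−k and σ̃_r = 0 for r > n−k. Then the ℤ-algebra map f sending e_1,...,e_{n-1} ↦ 0, e_n ↦ (−1)^k q, and σ_i ↦ σ_i descends to a well-defined ring homomorphism f: A → ℤ[σ_1,...,σ_{n-k}, q]/(Y_{k+1},...,Y_{n-1}, Y_n + (−1)^{n−k} q). -/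
open MvPolynomial

/-- Given sequences `e` and `st` (with `st` playing the role of `σ̃`), `shat e st` is the
sequence `σ̂` determined by the recursion `σ̃_r = ∑_{i=0}^{r} e_i σ̂_{r-i}` (assuming
`e 0 = 1`), i.e. `σ̂_r = σ̃_r - ∑_{i=1}^{r} e_i σ̂_{r-i}`. -/
noncomputable def shat {R : Type*} [CommRing R] (e st : ℕ → R) : ℕ → R
  | r => st r - ∑ i : Fin r, e (r - i.val) * shat e st i.val
termination_by r => r
decreasing_by exact i.isLt

/-- `σ̂` extended to integer indices, vanishing for negative indices. -/
noncomputable def shatZ {R : Type*} [CommRing R] (e st : ℕ → R) (m : ℤ) : R :=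
  if 0 ≤ m then shat e st m.toNat else 0

/-- The equivariant Giambelli determinant `Ŷ_r = det (σ̂_{1+j-i})_{1 ≤ i,j ≤ r}`. -/
noncomputable def Yhat {R : Type*} [CommRing R] (e st : ℕ → R) (r : ℕ) : R :=
  Matrix.det (Matrix.of fun i j : Fin r => shatZ e st (1 + (j.val : ℤ) - (i.val : ℤ)))

/-- Source ring `A`'s ambient polynomial ring: `ℤ[σ_1, ..., σ_{n-k}, e_1, ..., e_n]`. -/
abbrev SrcRing (n k : ℕ) := MvPolynomial (Fin (n - k) ⊕ Fin n) ℤ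

/-- Target ambient polynomial ring `ℤ[σ_1, ..., σ_{n-k}, q]`. -/
abbrev TgtRing (n k : ℕ) := MvPolynomial (Fin (n - k) ⊕ Unit) ℤ

/-- `e_i` in the source ring: `e_0 = 1`, variables for `1 ≤ i ≤ n`, `0` beyond. -/
noncomputable def eSrc (n k : ℕ) : ℕ → SrcRing n k := fun i =>
  if i = 0 then 1 else if h : i - 1 < n then X (Sum.inr ⟨i - 1, h⟩) else 0

/-- `σ̃_m` in the source ring: `σ̃_0 = 1`, `σ̃_m = σ_m` (a variable) for `1 ≤ m ≤ n-k`,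
and `σ̃_m = 0` for `m > n - k`. -/
noncomputable def stSrc (n k : ℕ) : ℕ → SrcRing n k := fun m =>
  if m = 0 then 1 else if h : m - 1 < n - k then X (Sum.inl ⟨m - 1, h⟩) else 0

/-- `σ_m` in the target ring, `σ_0 = 1`, `σ_m = 0` for `m < 0` or `m > n - k`. -/
noncomputable def sigTgt (n k : ℕ) (m : ℤ) : TgtRing n k :=
  if m = 0 then 1
  else if h : 1 ≤ m ∧ m ≤ (n : ℤ) - (k : ℤ) then
    X (Sum.inl ⟨(m - 1).toNat, by omega⟩)
  else 0

/-- The quantum variable. -/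
noncomputable def qv (n k : ℕ) : TgtRing n k := X (Sum.inr ())

/-- `Y_r = det (σ_{1+j-i})` in the target ring. -/
noncomputable def Ytgt (n k : ℕ) (r : ℕ) : TgtRing n k :=
  Matrix.det (Matrix.of fun i j : Fin r => sigTgt n k (1 + (j.val : ℤ) - (i.val : ℤ)))

/-- The Siebert–Tian relation ideal `(Y_{k+1}, ..., Y_{n-1}, Y_n + (-1)^{n-k} q)`. -/
noncomputable def STideal (n k : ℕ) : Ideal (TgtRing n k) :=
  Ideal.span ({Ytgt n k n + (-1) ^ (n - k) * qv n k} ∪ (Ytgt n k) '' (Set.Icc (k + 1) (n - 1)))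

/-- The partially forgetful map `f : ℤ[σ, e] → ℤ[σ, q]`, `σ_i ↦ σ_i`,
`e_i ↦ 0` for `1 ≤ i ≤ n - 1`, `e_n ↦ (-1)^k q`. -/
noncomputable def forgetMap (n k : ℕ) : SrcRing n k →+* TgtRing n k :=
  (MvPolynomial.aeval (fun v : Fin (n - k) ⊕ Fin n =>
    match v with
    | Sum.inl i => (X (Sum.inl i) : TgtRing n k)
    | Sum.inr i => if i.val = n - 1 then (-1) ^ k * qv n k else 0) :
    SrcRing n k →ₐ[ℤ] TgtRing n k).toRingHom

section Aux
variable (n k : ℕ)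

lemma f_eSrc (m : ℕ) :
    forgetMap n k (eSrc n k m) =
      if m = 0 then 1 else if m = n then (-1) ^ k * qv n k else 0 := by
  unfold eSrc forgetMap
  rcases eq_or_ne m 0 with h0 | h0
  · simp [h0]
  · simp only [h0, if_false]
    rcases lt_or_ge (m - 1) n with h1 | h1
    · rw [dif_pos h1]
      simp only [AlgHom.toRingHom_eq_coe, RingHom.coe_coe, aeval_X]
      by_cases hm : m = n
      · have : m - 1 = n - 1 := by omega
        simp [hm, this]
      · have : m - 1 ≠ n - 1 := by omega
        simp [hm, this]
    · have hm : m ≠ n := by omega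
      rw [dif_neg (by omega)]
      simp [hm]

lemma f_stSrc (m : ℕ) :
    forgetMap n k (stSrc n k m) = sigTgt n k (m : ℤ) := by
  unfold stSrc forgetMap sigTgt
  rcases eq_or_ne m 0 with h0 | h0
  · simp [h0]
  · simp only [h0, if_false, Nat.cast_eq_zero, Int.natCast_eq_zero]
    rcases lt_or_ge (m - 1) (n - k) with h1 | h1
    · rw [dif_pos h1, dif_pos (by omega)]
      simp only [AlgHom.toRingHom_eq_coe, RingHom.coe_coe, aeval_X]
      have hval : ((m : ℤ) - 1).toNat = m - 1 := by omega
      exact congrArg (X ∘ Sum.inl) (Fin.ext (by simp [hval]))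
    · rw [dif_neg (by omega), dif_neg (by omega)]
      simp

lemma f_shat_lt (hkn : k < n) (r : ℕ) (hr : r < n) :
    forgetMap n k (shat (eSrc n k) (stSrc n k) r) = sigTgt n k (r : ℤ) := by
  induction r using Nat.strong_induction_on with
  | _ r ih =>
    rw [shat, map_sub, map_sum, f_stSrc]
    have : ∀ i : Fin r,
        forgetMap n k (eSrc n k (r - i.val) * shat (eSrc n k) (stSrc n k) i.val) = 0 := by
      intro i
      rw [map_mul, f_eSrc]
      have h1 : r - i.val ≠ 0 := by omega
      have h2 : r - i.val ≠ n := by omega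
      simp [h1, h2]
    rw [Finset.sum_congr rfl (fun i _ => this i)]
    simp

lemma f_shat_n (hkn : k < n) :
    forgetMap n k (shat (eSrc n k) (stSrc n k) n) =
      sigTgt n k (n : ℤ) - (-1) ^ k * qv n k := by
  rw [shat, map_sub, map_sum, f_stSrc]
  have hn0 : 0 < n := hkn.trans_le' (Nat.zero_le k) |>.trans_le le_rfl
  have key : ∀ i ∈ (Finset.univ : Finset (Fin n)),
      forgetMap n k (eSrc n k (n - i.val) * shat (eSrc n k) (stSrc n k) i.val) =
        if i = (⟨0, hn0⟩ : Fin n) then (-1) ^ k * qv n k else 0 := by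
    intro i _
    rw [map_mul, f_eSrc]
    by_cases hi : i = (⟨0, hn0⟩ : Fin n)
    · subst hi
      simp only [Nat.sub_zero]
      have h1 : n ≠ 0 := by omega
      have hs : shat (eSrc n k) (stSrc n k) 0 = 1 := by
        rw [shat]; unfold stSrc; simp
      simp [h1, hs]
    · have h0 : i.val ≠ 0 := fun h => hi (Fin.ext h)
      have h1 : n - i.val ≠ 0 := by omega
      have h2 : n - i.val ≠ n := by omega
      simp [h1, h2, hi]
  rw [Finset.sum_congr rfl key, Finset.sum_ite_eq' Finset.univ (⟨0, hn0⟩ : Fin n)]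
  simp

lemma sigTgt_neg (m : ℤ) (hm : m < 0) : sigTgt n k m = 0 := by
  unfold sigTgt
  rw [if_neg (by omega), dif_neg (by omega)]

lemma f_shatZ_lt (hkn : k < n) (m : ℤ) (hm : m < n) :
    forgetMap n k (shatZ (eSrc n k) (stSrc n k) m) = sigTgt n k m := by
  unfold shatZ
  rcases le_or_gt 0 m with h | h
  · rw [if_pos h, f_shat_lt n k hkn m.toNat (by omega)]
    congr 1
    omega
  · rw [if_neg (by omega), map_zero, sigTgt_neg n k m h]

lemma f_Yhat_lt (hkn : k < n) (r : ℕ) (hr : r < n) :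
    forgetMap n k (Yhat (eSrc n k) (stSrc n k) r) = Ytgt n k r := by
  unfold Yhat Ytgt
  rw [RingHom.map_det]
  congr 1
  refine Matrix.ext fun i j => ?_
  simp only [RingHom.mapMatrix_apply, Matrix.map_apply, Matrix.of_apply]
  refine f_shatZ_lt n k hkn (1 + (j.val : ℤ) - (i.val : ℤ)) ?_
  have := j.isLt; have := i.isLt; omega

end Aux

section Aux2
variable (n k : ℕ)

lemma sigTgt_zero : sigTgt n k 0 = 1 := by unfold sigTgt; simp

lemma f_Yhat_n {n k : ℕ} (hkn : k < n) :
    forgetMap n k (Yhat (eSrc n k) (stSrc n k) n) =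
      Ytgt n k n + (-1) ^ (n - k) * qv n k := by
  obtain ⟨m, rfl⟩ : ∃ m, n = m + 1 := ⟨n - 1, by omega⟩
  have hkm : k ≤ m := by omega
  set c : TgtRing (m + 1) k := (-1) ^ k * qv (m + 1) k with hc
  set M : Matrix (Fin (m + 1)) (Fin (m + 1)) (TgtRing (m + 1) k) :=
    Matrix.of fun i j : Fin (m + 1) => sigTgt (m + 1) k (1 + (j.val : ℤ) - (i.val : ℤ)) with hM
  set w : Fin (m + 1) → TgtRing (m + 1) k := fun j => if j = Fin.last m then 1 else 0 with hw
  have hfn : forgetMap (m + 1) k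
      (shatZ (eSrc (m + 1) k) (stSrc (m + 1) k) ((m + 1 : ℕ) : ℤ)) =
      sigTgt (m + 1) k ((m + 1 : ℕ) : ℤ) - c := by
    unfold shatZ
    rw [if_pos (by positivity), Int.toNat_natCast]
    exact f_shat_n (m + 1) k hkn
  have himg : (forgetMap (m + 1) k).mapMatrix
      (Matrix.of fun i j : Fin (m + 1) => shatZ (eSrc (m + 1) k) (stSrc (m + 1) k)
        (1 + (j.val : ℤ) - (i.val : ℤ))) =
      M.updateRow 0 (M 0 + (-c) • w) := by
    refine Matrix.ext fun i j => ?_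
    simp only [RingHom.mapMatrix_apply, Matrix.map_apply, Matrix.of_apply]
    by_cases hi : i = 0
    · subst hi
      rw [Matrix.updateRow_self]
      by_cases hj : j = Fin.last m
      · subst hj
        have hidx : (1 + ((Fin.last m).val : ℤ) - ((0 : Fin (m + 1)).val : ℤ))
            = ((m + 1 : ℕ) : ℤ) := by simp [Fin.val_last]; push_cast; ring
        rw [hidx, hfn]
        simp [hw, hM, hidx, Pi.add_apply, Pi.smul_apply]
        ring
      · have hlt : (1 + (j.val : ℤ) - ((0 : Fin (m + 1)).val : ℤ)) < (m + 1 : ℕ) := by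
          have := j.isLt
          have hjv : j.val ≠ m := fun h => hj (Fin.ext (by simp [Fin.val_last, h]))
          simp only [Fin.val_zero]
          push_cast
          omega
        rw [f_shatZ_lt (m + 1) k hkn _ hlt]
        simp [hw, hj, hM]
    · rw [Matrix.updateRow_ne hi]
      have hlt : (1 + (j.val : ℤ) - (i.val : ℤ)) < (m + 1 : ℕ) := by
        have := j.isLt
        have hi' : 0 < i.val := Nat.pos_of_ne_zero (fun h => hi (Fin.ext h))
        push_cast
        omega
      rw [f_shatZ_lt (m + 1) k hkn _ hlt]
      simp [hM]
  have hE : (M.updateRow 0 w).det = (-1) ^ m := by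
    rw [Matrix.det_succ_row_zero, Finset.sum_eq_single (Fin.last m)]
    · have h0 : (M.updateRow 0 w) 0 (Fin.last m) = 1 := by
        simp [Matrix.updateRow_self, hw]
      rw [h0]
      have htri : ((M.updateRow 0 w).submatrix Fin.succ
          (Fin.last m).succAbove).BlockTriangular id := by
        intro i j hij
        simp only [Matrix.submatrix_apply, Fin.succAbove_last]
        rw [Matrix.updateRow_ne (Fin.succ_ne_zero i)]
        simp only [hM, Matrix.of_apply]
        apply sigTgt_neg
        have hij' : (j : ℕ) < (i : ℕ) := hij
        simp only [Fin.coe_castSucc, Fin.val_succ]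
        push_cast
        omega
      rw [Matrix.det_of_upperTriangular htri]
      have hprod : ∀ i : Fin m, ((M.updateRow 0 w).submatrix Fin.succ
          (Fin.last m).succAbove) i i = 1 := by
        intro i
        simp only [Matrix.submatrix_apply, Fin.succAbove_last]
        rw [Matrix.updateRow_ne (Fin.succ_ne_zero i)]
        simp only [hM, Matrix.of_apply]
        have : (1 + ((i.castSucc).val : ℤ) - ((i.succ).val : ℤ)) = 0 := by
          simp only [Fin.coe_castSucc, Fin.val_succ]
          push_cast
          ring
        rw [this, sigTgt_zero]
      rw [Finset.prod_congr rfl (fun i _ => hprod i)]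
      simp [Fin.val_last]
    · intro j _ hj
      have : (M.updateRow 0 w) 0 j = 0 := by
        simp [Matrix.updateRow_self, hw, hj]
      rw [this]
      ring
    · simp
  unfold Yhat Ytgt
  rw [RingHom.map_det, himg, Matrix.det_updateRow_add, Matrix.det_updateRow_smul,
    Matrix.updateRow_eq_self, hE]
  congr 1
  have h2 : (-1 : TgtRing (m + 1) k) ^ (m + 1 - k) = (-1) ^ (m + 1 + k) := by
    have : m + 1 + k = (m + 1 - k) + 2 * k := by omega
    rw [this, pow_add, pow_mul]
    norm_num
  rw [h2, pow_add, pow_succ]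
  ring

end Aux2

/-- The map `f` sends the relation ideal `(Ŷ_{k+1}, ..., Ŷ_n)` of the equivariant
presentation into the Siebert–Tian relation ideal, hence descends to a ring
homomorphism `A → QH`. -/
theorem forgetMap_descends (n k : ℕ) (hkn : k < n) :
    Ideal.span ((Yhat (eSrc n k) (stSrc n k)) '' (Set.Icc (k + 1) n)) ≤
      Ideal.comap (forgetMap n k) (STideal n k) := by
  rw [Ideal.span_le]
  rintro x ⟨r, ⟨hr1, hr2⟩, rfl⟩
  simp only [SetLike.mem_coe, Ideal.mem_comap]
  unfold STideal
  rcases eq_or_lt_of_le hr2 with h | h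
  · subst h
    rw [f_Yhat_n hkn]
    exact Ideal.subset_span (Set.mem_union_left _ rfl)
  · rw [f_Yhat_lt n k hkn r h]
    exact Ideal.subset_span (Set.mem_union_right _ ⟨r, ⟨hr1, by omega⟩, rfl⟩)
end

section
/- Let R be a commutative ring with elements ŝ_0 = 1, ŝ_1, ŝ_2, ... and e_1, ..., e_n (set e_0 = 1, e_m = 0 for m > n), and define s̃_r := ∑_{i=0}^{r} e_i ŝ_{r−i}. Define Ê_r := det(ŝ_{1+j−i})_{1≤i,j≤r} and Ẽ_r := det(s̃_{1+j−i} − δ_{rj} e_{1+j−i})_{1≤i,j≤r} (conventions: ŝ_m = s̃_m = 0 for m < 0). Then Ê_r = Ẽ_r for all r ≥ 1. -/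
/-!
The matrix of `Ẽ_r` is `L * Ŝ`, where `Ŝ = (ŝ_{1+j-i})` is the matrix of `Ê_r` and
`L = (e_{k-i})` is upper unitriangular (these are the row operations). Indeed the `(i, j)` entry
of `L * Ŝ` is the convolution `∑_k e_{k-i} ŝ_{1+j-k} = s̃_{1+j-i}`, except in the last column,
where the term `k = r` lies outside the matrix and is missing; that term is `e_{1+j-i} ŝ_0`.
Since `det L = 1`, the determinants agree.
-/

open Finset

/-- A sequence extended to integer indices, vanishing for negative indices. -/
def seqZ {R : Type*} [CommRing R] (c : ℕ → R) (m : ℤ) : R :=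
  if 0 ≤ m then c m.toNat else 0

section

variable {R : Type*} [CommRing R]

@[simp]
lemma seqZ_natCast (c : ℕ → R) (m : ℕ) : seqZ c m = c m := by
  simp [seqZ]

lemma seqZ_of_neg (c : ℕ → R) {m : ℤ} (h : m < 0) : seqZ c m = 0 := by
  simp [seqZ, not_le.mpr h]

lemma sum_range_seqZ_mul_seqZ {a b c : ℕ → R}
    (hc : ∀ m, c m = ∑ i ∈ range (m + 1), a i * b (m - i)) {i m N : ℕ} (hm : m ≤ N) :
    ∑ k ∈ range (N + 1), seqZ a ((k : ℤ) - i) * seqZ b ((m : ℤ) - k) = seqZ c ((m : ℤ) - i) := by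
  have h_out : ∀ k ∉ Ico i (m + 1), seqZ a ((k : ℤ) - i) * seqZ b ((m : ℤ) - k) = 0 := by
    intro k hk
    rcases Nat.lt_or_ge k i with hki | hik
    · rw [seqZ_of_neg a (by omega), zero_mul]
    · rw [seqZ_of_neg b (by simp at hk; omega), mul_zero]
  rw [← sum_subset (fun k hk => by simp at hk ⊢; omega) fun k _ => h_out k]
  rcases Nat.lt_or_ge m i with hmi | him
  · rw [Ico_eq_empty (by omega), sum_empty, seqZ_of_neg c (by omega)]
  · have h_cast : (m : ℤ) - i = ((m - i : ℕ) : ℤ) := by omega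
    rw [sum_Ico_eq_sum_range, h_cast, seqZ_natCast, hc, show m + 1 - i = m - i + 1 by omega]
    refine sum_congr rfl fun t ht => ?_
    rw [mem_range] at ht
    rw [show ((i + t : ℕ) : ℤ) - i = (t : ℕ) by push_cast; ring,
      show (m : ℤ) - (i + t : ℕ) = ((m - i - t : ℕ) : ℤ) by omega, seqZ_natCast, seqZ_natCast]

lemma det_of_seqZ_sub_eq_one {c : ℕ → R} (hc0 : c 0 = 1) (r : ℕ) :
    (Matrix.of fun i k : Fin r => seqZ c ((k : ℤ) - i)).det = 1 := by
  have h_tri : (Matrix.of fun i k : Fin r => seqZ c ((k : ℤ) - i)).BlockTriangular id :=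
    fun i k hki => seqZ_of_neg c (by simp only [id_eq, Fin.lt_def] at hki; omega)
  rw [Matrix.det_of_isUpperTriangular h_tri]
  exact prod_eq_one fun i _ => by simp [seqZ, hc0]

lemma sum_fin_seqZ_mul_seqZ {a b c : ℕ → R} (hb0 : b 0 = 1)
    (hc : ∀ m, c m = ∑ i ∈ range (m + 1), a i * b (m - i)) {r : ℕ} (i j : Fin r) :
    ∑ k : Fin r, seqZ a ((k : ℤ) - i) * seqZ b (1 + (j : ℤ) - k) =
      seqZ c (1 + (j : ℤ) - i) - if j.val = r - 1 then seqZ a (1 + (j : ℤ) - i) else 0 := by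
  have h_conv := sum_range_seqZ_mul_seqZ hc (i := i) (m := j + 1) (N := r) j.isLt
  push_cast at h_conv
  rw [sum_range_succ, add_comm _ (1 : ℤ)] at h_conv
  rw [Fin.sum_univ_eq_sum_range (fun k => seqZ a ((k : ℤ) - i) * seqZ b (1 + (j : ℤ) - k)),
    ← h_conv]
  split_ifs with hj
  · have hr : (r : ℤ) = 1 + j := by omega
    rw [hr, sub_self, ← Nat.cast_zero, seqZ_natCast, hb0, mul_one, add_sub_cancel_right]
  · rw [seqZ_of_neg b (by omega), mul_zero, add_zero, sub_zero]

end

theorem row_operation_det_identity_general {R : Type*} [CommRing R] (sh e : ℕ → R)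
    (hsh0 : sh 0 = 1) (he0 : e 0 = 1)
    (st : ℕ → R)
    (hst : ∀ r, st r = ∑ i ∈ Finset.range (r + 1), e i * sh (r - i))
    (r : ℕ) :
    Matrix.det (Matrix.of fun i j : Fin r =>
        seqZ sh (1 + (j.val : ℤ) - (i.val : ℤ))) =
      Matrix.det (Matrix.of fun i j : Fin r =>
        seqZ st (1 + (j.val : ℤ) - (i.val : ℤ)) -
          if j.val = r - 1 then seqZ e (1 + (j.val : ℤ) - (i.val : ℤ)) else 0) := by
  set L := Matrix.of fun i k : Fin r => seqZ e ((k : ℤ) - i)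
  have h_row_ops : (Matrix.of fun i j : Fin r =>
      seqZ st (1 + (j.val : ℤ) - (i.val : ℤ)) -
        if j.val = r - 1 then seqZ e (1 + (j.val : ℤ) - (i.val : ℤ)) else 0) =
      L * Matrix.of fun i j : Fin r => seqZ sh (1 + (j.val : ℤ) - (i.val : ℤ)) := by
    ext i j
    rw [Matrix.mul_apply]
    exact (sum_fin_seqZ_mul_seqZ hsh0 hst i j).symm
  rw [h_row_ops, Matrix.det_mul, det_of_seqZ_sub_eq_one he0, one_mul]

/-- Row-operation identity: let `ŝ_0 = 1`, `e_0 = 1`, `e_m = 0` for `m > n`, and set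
`s̃_r := ∑_{i=0}^{r} e_i ŝ_{r-i}`. Then for every `r ≥ 1` the determinants
`Ê_r = det (ŝ_{1+j-i})` and `Ẽ_r = det (s̃_{1+j-i} - δ_{r j} e_{1+j-i})` coincide. -/
theorem row_operation_det_identity {R : Type*} [CommRing R] (n : ℕ) (sh e : ℕ → R)
    (hsh0 : sh 0 = 1) (he0 : e 0 = 1) (hen : ∀ m, n < m → e m = 0)
    (st : ℕ → R)
    (hst : ∀ r, st r = ∑ i ∈ Finset.range (r + 1), e i * sh (r - i))
    (r : ℕ) (hr : 1 ≤ r) :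
    Matrix.det (Matrix.of fun i j : Fin r =>
        seqZ sh (1 + (j.val : ℤ) - (i.val : ℤ))) =
      Matrix.det (Matrix.of fun i j : Fin r =>
        seqZ st (1 + (j.val : ℤ) - (i.val : ℤ)) -
          if j.val = r - 1 then seqZ e (1 + (j.val : ℤ) - (i.val : ℤ)) else 0) :=
  row_operation_det_identity_general sh e hsh0 he0 st hst r
end
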